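/- arXiv:1901.04457 — 3 statements merged into one kernel-verified Lean document; each statement's English description precedes it below -/
import Mathlib

section
/- Let B be a standard Brownian motion on [0, T] and let 0 = t_1 < t_2 < … < t_J = T be quadrature nodes. Then the error of the trapezoidal rule applied to the data (t_j, B_{t_j})_{j=1}^J as an estimator of ∫_0^T B_t dt has mean zero and its mean squared error satisfies E[ ( ∫_0^T B_t dt − B_tr((t_j, B_{t_j})_{j=1}^J) )^2 ] = (1/12) ∑_{j=1}^{J−1} (t_{j+1} − t_j)^3. -/
open MeasureTheory ProbabilityTheory Finset

/-- A standard Brownian motion on `[0, T]`: a stochastic process with measurable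
marginals, continuous sample paths, `B 0 = 0` almost surely, and such that every
finite linear combination of marginals at times in `[0, T]` is centered Gaussian
with covariances `E[B s * B t] = min s t` (Cramér–Wold formulation). -/
def IsStdBrownianMotion {Ω : Type*} [MeasurableSpace Ω] (P : Measure Ω)
    (B : ℝ → Ω → ℝ) (T : ℝ) : Prop :=
  (∀ s ∈ Set.Icc (0 : ℝ) T, Measurable (B s)) ∧
  (∀ ω, ContinuousOn (fun s => B s ω) (Set.Icc 0 T)) ∧
  (∀ᵐ ω ∂P, B 0 ω = 0) ∧
  ∀ (n : ℕ) (ts : Fin n → ℝ), (∀ i, ts i ∈ Set.Icc (0 : ℝ) T) →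
    ∀ c : Fin n → ℝ,
      P.map (fun ω => ∑ i, c i * B (ts i) ω)
        = gaussianReal 0 (Real.toNNReal (∑ i, ∑ j, c i * c j * min (ts i) (ts j)))

/-- The trapezoidal rule with nodes `t 0 < t 1 < ⋯ < t (J-1)` applied to values
`z 0, …, z (J-1)`. -/
noncomputable def trapezoid (J : ℕ) (t z : ℕ → ℝ) : ℝ :=
  (1 / 2) * ∑ j ∈ Finset.range (J - 1), (z (j + 1) + z j) * (t (j + 1) - t j)

/-!
Exchanging expectation and time integrals (Fubini, justified by the uniform bound `E[B_s²] ≤ T`)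
shows that the error of the trapezoidal rule on `[a, b]`, which is integration of the path against
`λ|[a,b] - (b - a)/2 • (δ_a + δ_b)`, has mean the trapezoidal error of `s ↦ E[B_s] = 0`, and that
the covariance of the errors on `[a, b]` and `[c, d]` is the iterated trapezoidal error of the
kernel `min s u`. For `s ∉ (c, d)` the function `u ↦ min s u` is affine on `[c, d]`, where the rule
is exact, so the errors on distinct subintervals are uncorrelated; for `s ∈ [a, b]` the inner error
on `[a, b]` itself is `(s - a)(b - s)/2`, whose trapezoidal error is `(b - a)³/12`.
-/

section SquareIntegrableProcess

open Function

variable {S Ω : Type*} [MeasurableSpace Ω] {P : Measure Ω} {X : S → Ω → ℝ} {M : ℝ}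

theorem integral_abs_mul_le (hL2 : ∀ s, MemLp (X s) 2 P) (hM : ∀ s, ∫ ω, X s ω ^ 2 ∂P ≤ M)
    (s u : S) : ∫ ω, |X s ω * X u ω| ∂P ≤ M := by
  calc ∫ ω, |X s ω * X u ω| ∂P
      ≤ ∫ ω, (X s ω ^ 2 + X u ω ^ 2) / 2 ∂P := by
        refine integral_mono ((hL2 s).integrable_mul (hL2 u)).abs
          (((hL2 s).integrable_sq.add (hL2 u).integrable_sq).div_const 2) fun ω => ?_
        rw [abs_mul]
        nlinarith [sq_nonneg (|X s ω| - |X u ω|), sq_abs (X s ω), sq_abs (X u ω)]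
    _ ≤ M := by
        rw [integral_div, integral_add (hL2 s).integrable_sq (hL2 u).integrable_sq]
        linarith [hM s, hM u]

theorem integral_abs_le [IsFiniteMeasure P] (hL2 : ∀ s, MemLp (X s) 2 P)
    (hM : ∀ s, ∫ ω, X s ω ^ 2 ∂P ≤ M) (s : S) : ∫ ω, |X s ω| ∂P ≤ (P.real Set.univ + M) / 2 := by
  calc ∫ ω, |X s ω| ∂P
      ≤ ∫ ω, (1 + X s ω ^ 2) / 2 ∂P := by
        refine integral_mono ((hL2 s).integrable one_le_two).abs
          (((integrable_const 1).add (hL2 s).integrable_sq).div_const 2) fun ω => ?_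
        nlinarith [sq_nonneg (|X s ω| - 1), sq_abs (X s ω)]
    _ ≤ (P.real Set.univ + M) / 2 := by
        rw [integral_div, integral_add (integrable_const 1) (hL2 s).integrable_sq]
        simp only [integral_const, smul_eq_mul, mul_one]
        linarith [hM s]

variable [MeasurableSpace S] [IsFiniteMeasure P] (hX : Measurable (uncurry X))
  (hL2 : ∀ s, MemLp (X s) 2 P) (hM : ∀ s, ∫ ω, X s ω ^ 2 ∂P ≤ M)
  (μ ν : Measure S) [IsFiniteMeasure μ] [IsFiniteMeasure ν]
include hX hL2 hM

theorem integrable_uncurry_prod : Integrable (uncurry X) (μ.prod P) := by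
  rw [integrable_prod_iff hX.aestronglyMeasurable]
  refine ⟨.of_forall fun s => (hL2 s).integrable one_le_two,
    hX.aestronglyMeasurable.norm.integral_prod_right', ?_⟩
  refine .of_bounded (C := (P.real Set.univ + M) / 2) (.of_forall fun s => ?_)
  rw [Real.norm_of_nonneg (integral_nonneg fun ω => norm_nonneg _)]
  exact integral_abs_le hL2 hM s

theorem integrable_uncurry_mul_prod :
    Integrable (fun q : (S × S) × Ω => X q.1.1 q.2 * X q.1.2 q.2) ((μ.prod ν).prod P) := by
  have hmeas : Measurable fun q : (S × S) × Ω => X q.1.1 q.2 * X q.1.2 q.2 :=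
    (hX.comp (measurable_fst.fst.prodMk measurable_snd)).mul
      (hX.comp (measurable_fst.snd.prodMk measurable_snd))
  rw [integrable_prod_iff hmeas.aestronglyMeasurable]
  refine ⟨.of_forall fun r => (hL2 r.1).integrable_mul (hL2 r.2),
    hmeas.aestronglyMeasurable.norm.integral_prod_right', ?_⟩
  refine .of_bounded (C := M) (.of_forall fun r => ?_)
  rw [Real.norm_of_nonneg (integral_nonneg fun ω => norm_nonneg _)]
  exact integral_abs_mul_le hL2 hM r.1 r.2

theorem integrable_integral : Integrable (fun ω => ∫ s, X s ω ∂μ) P :=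
  (integrable_uncurry_prod hX hL2 hM μ).integral_prod_right

theorem integral_integral_comm : ∫ ω, ∫ s, X s ω ∂μ ∂P = ∫ s, ∫ ω, X s ω ∂P ∂μ :=
  (integral_integral_swap (integrable_uncurry_prod hX hL2 hM μ)).symm

theorem integrable_integral_mul_integral :
    Integrable (fun ω => (∫ s, X s ω ∂μ) * ∫ u, X u ω ∂ν) P := by
  simpa only [← integral_prod_mul] using
    (integrable_uncurry_mul_prod hX hL2 hM μ ν).integral_prod_right

theorem integral_integral_mul_integral :
    ∫ ω, (∫ s, X s ω ∂μ) * (∫ u, X u ω ∂ν) ∂P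
      = ∫ s, ∫ u, ∫ ω, X s ω * X u ω ∂P ∂ν ∂μ := by
  have hint := integrable_uncurry_mul_prod hX hL2 hM μ ν
  simp_rw [← integral_prod_mul (μ := μ) (ν := ν)]
  rw [← integral_integral_swap (f := fun (r : S × S) ω => X r.1 ω * X r.2 ω) hint]
  exact integral_prod _ hint.integral_prod_left

theorem integrable_integral_integral_mul :
    Integrable (fun s => ∫ u, ∫ ω, X s ω * X u ω ∂P ∂ν) μ :=
  (integrable_uncurry_mul_prod hX hL2 hM μ ν).integral_prod_left.integral_prod_left

variable (μ' ν' : Measure S) [IsFiniteMeasure μ'] [IsFiniteMeasure ν']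

theorem integral_integral_sub_integral :
    ∫ ω, ((∫ s, X s ω ∂μ) - ∫ s, X s ω ∂μ') ∂P
      = (∫ s, ∫ ω, X s ω ∂P ∂μ) - ∫ s, ∫ ω, X s ω ∂P ∂μ' := by
  rw [integral_sub (integrable_integral hX hL2 hM μ) (integrable_integral hX hL2 hM μ'),
    integral_integral_comm hX hL2 hM, integral_integral_comm hX hL2 hM]

theorem integrable_integral_sub_integral_mul :
    Integrable (fun ω => ((∫ s, X s ω ∂μ) - ∫ s, X s ω ∂μ')
      * ((∫ u, X u ω ∂ν) - ∫ u, X u ω ∂ν')) P := by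
  simp only [sub_mul, mul_sub]
  have hII := integrable_integral_mul_integral hX hL2 hM
  exact ((hII μ ν).sub (hII μ' ν)).sub ((hII μ ν').sub (hII μ' ν'))

theorem integral_integral_sub_integral_mul :
    ∫ ω, ((∫ s, X s ω ∂μ) - ∫ s, X s ω ∂μ') * ((∫ u, X u ω ∂ν) - ∫ u, X u ω ∂ν') ∂P
      = (∫ s, ((∫ u, ∫ ω, X s ω * X u ω ∂P ∂ν) - ∫ u, ∫ ω, X s ω * X u ω ∂P ∂ν') ∂μ)
        - ∫ s, ((∫ u, ∫ ω, X s ω * X u ω ∂P ∂ν) - ∫ u, ∫ ω, X s ω * X u ω ∂P ∂ν') ∂μ' := by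
  have hII := integrable_integral_mul_integral hX hL2 hM
  have hK := integrable_integral_integral_mul hX hL2 hM
  simp only [sub_mul, mul_sub]
  rw [integral_sub, integral_sub, integral_sub, integral_sub (hK μ ν) (hK μ ν'),
    integral_sub (hK μ' ν) (hK μ' ν')]
  · simp only [integral_integral_mul_integral hX hL2 hM]
    ring
  all_goals first
    | exact (hII _ _).sub (hII _ _)
    | exact hII _ _

end SquareIntegrableProcess

theorem integral_sq_sum_of_orthogonal {ι Ω : Type*} [MeasurableSpace Ω] {P : Measure Ω}
    (s : Finset ι) (Y : ι → Ω → ℝ)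
    (hint : ∀ i ∈ s, ∀ j ∈ s, Integrable (fun ω => Y i ω * Y j ω) P)
    (horth : ∀ i ∈ s, ∀ j ∈ s, i ≠ j → ∫ ω, Y i ω * Y j ω ∂P = 0) :
    ∫ ω, (∑ i ∈ s, Y i ω) ^ 2 ∂P = ∑ i ∈ s, ∫ ω, Y i ω ^ 2 ∂P := by
  simp_rw [sq, Finset.sum_mul_sum]
  rw [integral_finsetSum _ fun i hi => integrable_finsetSum _ fun j hj => hint i hi j hj]
  refine Finset.sum_congr rfl fun i hi => ?_
  rw [integral_finsetSum _ fun j hj => hint i hi j hj]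
  exact Finset.sum_eq_single_of_mem i hi fun j hj hji => horth i hi j hj hji.symm

section Trapezoid

open Set

noncomputable def trapezoidError (a b : ℝ) (f : ℝ → ℝ) : ℝ :=
  (∫ s in a..b, f s) - (b - a) / 2 * (f a + f b)

noncomputable def trapezoidMeasure (a b : ℝ) : Measure ℝ :=
  ((b - a) / 2).toNNReal • (Measure.dirac a + Measure.dirac b)

instance (a b : ℝ) : IsFiniteMeasure (trapezoidMeasure a b) := by
  unfold trapezoidMeasure
  infer_instance

variable {a b : ℝ}

theorem integral_trapezoidMeasure (hab : a ≤ b) (f : ℝ → ℝ) :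
    ∫ x, f x ∂trapezoidMeasure a b = (b - a) / 2 * (f a + f b) := by
  rw [trapezoidMeasure, integral_smul_nnreal_measure, integral_add_measure
    (integrable_dirac enorm_lt_top) (integrable_dirac enorm_lt_top), integral_dirac,
    integral_dirac, NNReal.smul_def, Real.coe_toNNReal _ (by linarith), smul_eq_mul]

theorem trapezoidError_eq_integral_sub_integral (hab : a ≤ b) (f : ℝ → ℝ) :
    trapezoidError a b f = (∫ x in Ioc a b, f x) - ∫ x, f x ∂trapezoidMeasure a b := by
  rw [trapezoidError, intervalIntegral.integral_of_le hab, integral_trapezoidMeasure hab]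

theorem trapezoidError_congr {f g : ℝ → ℝ} (h : EqOn f g (uIcc a b)) :
    trapezoidError a b f = trapezoidError a b g := by
  rw [trapezoidError, trapezoidError, intervalIntegral.integral_congr h, h left_mem_uIcc,
    h right_mem_uIcc]

theorem trapezoidError_affine (α β : ℝ) : trapezoidError a b (fun x => α * x + β) = 0 := by
  rw [trapezoidError,
    intervalIntegral.integral_add ((continuous_const_mul α).intervalIntegrable a b)
      intervalIntegrable_const,
    intervalIntegral.integral_const_mul, integral_id, intervalIntegral.integral_const, smul_eq_mul]
  ring

theorem trapezoidError_min_of_notMem_Ioo {s : ℝ} (hab : a ≤ b) (hs : s ∉ Ioo a b) :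
    trapezoidError a b (fun u => min s u) = 0 := by
  rcases le_or_gt s a with hsa | has
  · calc trapezoidError a b (fun u => min s u) = trapezoidError a b (fun u => 0 * u + s) :=
          trapezoidError_congr fun u hu => by
            rw [uIcc_of_le hab] at hu
            simp [min_eq_left (hsa.trans hu.1)]
      _ = 0 := trapezoidError_affine 0 s
  · have hbs : b ≤ s := not_lt.mp fun hsb => hs ⟨has, hsb⟩
    calc trapezoidError a b (fun u => min s u) = trapezoidError a b (fun u => 1 * u + 0) :=
          trapezoidError_congr fun u hu => by
            rw [uIcc_of_le hab] at hu
            simp [min_eq_right (hu.2.trans hbs)]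
      _ = 0 := trapezoidError_affine 1 0

theorem trapezoidError_min_of_mem {s : ℝ} (hs : s ∈ Icc a b) :
    trapezoidError a b (fun u => min s u) = (s - a) * (b - s) / 2 := by
  have hint : ∀ x y : ℝ, IntervalIntegrable (fun u => min s u) volume x y :=
    (continuous_const.min continuous_id).intervalIntegrable
  have hleft : ∫ u in a..s, min s u = ∫ u in a..s, u :=
    intervalIntegral.integral_congr fun u hu => by
      rw [uIcc_of_le hs.1] at hu
      exact min_eq_right hu.2
  have hright : ∫ u in s..b, min s u = ∫ _ in s..b, s :=
    intervalIntegral.integral_congr fun u hu => by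
      rw [uIcc_of_le hs.2] at hu
      exact min_eq_left hu.1
  rw [trapezoidError, ← intervalIntegral.integral_add_adjacent_intervals (hint a s) (hint s b),
    hleft, hright, integral_id, intervalIntegral.integral_const, smul_eq_mul, min_eq_right hs.1,
    min_eq_left hs.2]
  ring

theorem trapezoidError_sub_mul_sub_div_two :
    trapezoidError a b (fun s => (s - a) * (b - s) / 2) = (b - a) ^ 3 / 12 := by
  have hderiv : ∀ x ∈ uIcc a b, HasDerivAt
      (fun s => ((a + b) * s ^ 2 / 2 - s ^ 3 / 3 - a * b * s) / 2) ((x - a) * (b - x) / 2) x :=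
    fun x _ => by
      refine ((((hasDerivAt_pow 2 x).const_mul (a + b)).div_const 2).sub
        ((hasDerivAt_pow 3 x).div_const 3) |>.sub
          ((hasDerivAt_id x).const_mul (a * b))).div_const 2 |>.congr_deriv ?_
      norm_num
      ring
  rw [trapezoidError, intervalIntegral.integral_eq_sub_of_hasDerivAt hderiv
    ((by fun_prop : Continuous fun s => (s - a) * (b - s) / 2).intervalIntegrable a b)]
  ring

theorem trapezoidError_trapezoidError_min_self (hab : a ≤ b) :
    trapezoidError a b (fun s => trapezoidError a b (fun u => min s u)) = (b - a) ^ 3 / 12 := by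
  rw [trapezoidError_congr fun s hs => trapezoidError_min_of_mem (uIcc_of_le hab ▸ hs),
    trapezoidError_sub_mul_sub_div_two]

theorem trapezoidError_trapezoidError_min_of_le_or_le {c d : ℝ} (hab : a ≤ b) (hcd : c ≤ d)
    (h : b ≤ c ∨ d ≤ a) :
    trapezoidError a b (fun s => trapezoidError c d (fun u => min s u)) = 0 := by
  have hzero : EqOn (fun s => trapezoidError c d (fun u => min s u)) (fun _ => 0) (uIcc a b) :=
    fun s hs => by
      rw [uIcc_of_le hab] at hs
      refine trapezoidError_min_of_notMem_Ioo hcd fun hs' => ?_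
      rcases h with h | h <;> linarith [hs.1, hs.2, hs'.1, hs'.2]
  rw [trapezoidError_congr hzero]
  simp [trapezoidError]

theorem MonotoneOn.Icc_subset_Icc_of_Iic {α : Type*} [Preorder α] {t : ℕ → α} {n i j : ℕ}
    (ht : MonotoneOn t (Set.Iic n)) (hij : i ≤ j) (hjn : j ≤ n) :
    Icc (t i) (t j) ⊆ Icc (t 0) (t n) :=
  Icc_subset_Icc
    (ht (Set.mem_Iic.2 (Nat.zero_le n)) (Set.mem_Iic.2 (hij.trans hjn)) (Nat.zero_le i))
    (ht (Set.mem_Iic.2 hjn) (Set.mem_Iic.2 le_rfl) hjn)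

theorem MonotoneOn.le_succ_of_lt {α : Type*} [Preorder α] {t : ℕ → α} {n j : ℕ}
    (ht : MonotoneOn t (Set.Iic n)) (hj : j < n) : t j ≤ t (j + 1) :=
  ht (Set.mem_Iic.2 hj.le) (Set.mem_Iic.2 hj) j.le_succ

theorem integral_sub_trapezoid (J : ℕ) (t : ℕ → ℝ) (f : ℝ → ℝ) (ht : MonotoneOn t (Set.Iic (J - 1)))
    (hf : ContinuousOn f (Icc (t 0) (t (J - 1)))) :
    (∫ s in t 0..t (J - 1), f s) - trapezoid J t (fun j => f (t j))
      = ∑ j ∈ Finset.range (J - 1), trapezoidError (t j) (t (j + 1)) f := by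
  have hint : ∀ j < J - 1, IntervalIntegrable f volume (t j) (t (j + 1)) := fun j hj => by
    refine (hf.mono ?_).intervalIntegrable
    rw [uIcc_of_le (ht.le_succ_of_lt hj)]
    exact ht.Icc_subset_Icc_of_Iic j.le_succ hj
  rw [← intervalIntegral.sum_integral_adjacent_intervals hint, trapezoid, Finset.mul_sum,
    ← Finset.sum_sub_distrib]
  refine Finset.sum_congr rfl fun j _ => ?_
  rw [trapezoidError]
  ring

end Trapezoid

section TrapezoidErrorOfProcess

open Function

variable {Ω : Type*} [MeasurableSpace Ω] {P : Measure Ω} [IsFiniteMeasure P] {X : ℝ → Ω → ℝ}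
  {M a b c d : ℝ} (hX : Measurable (uncurry X)) (hL2 : ∀ s, MemLp (X s) 2 P)
  (hM : ∀ s, ∫ ω, X s ω ^ 2 ∂P ≤ M)
include hX hL2 hM

theorem integrable_trapezoidError (hab : a ≤ b) :
    Integrable (fun ω => trapezoidError a b (X · ω)) P := by
  simp only [trapezoidError_eq_integral_sub_integral hab]
  exact (integrable_integral hX hL2 hM _).sub (integrable_integral hX hL2 hM _)

theorem integral_trapezoidError (hab : a ≤ b) :
    ∫ ω, trapezoidError a b (X · ω) ∂P = trapezoidError a b (fun s => ∫ ω, X s ω ∂P) := by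
  simp only [trapezoidError_eq_integral_sub_integral hab]
  exact integral_integral_sub_integral hX hL2 hM _ _

theorem integrable_trapezoidError_mul (hab : a ≤ b) (hcd : c ≤ d) :
    Integrable (fun ω => trapezoidError a b (X · ω) * trapezoidError c d (X · ω)) P := by
  simp only [trapezoidError_eq_integral_sub_integral hab,
    trapezoidError_eq_integral_sub_integral hcd]
  exact integrable_integral_sub_integral_mul hX hL2 hM _ _ _ _

theorem integral_trapezoidError_mul (hab : a ≤ b) (hcd : c ≤ d) :
    ∫ ω, trapezoidError a b (X · ω) * trapezoidError c d (X · ω) ∂P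
      = trapezoidError a b (fun s => trapezoidError c d (fun u => ∫ ω, X s ω * X u ω ∂P)) := by
  simp only [trapezoidError_eq_integral_sub_integral hab,
    trapezoidError_eq_integral_sub_integral hcd]
  exact integral_integral_sub_integral_mul hX hL2 hM _ _ _ _

end TrapezoidErrorOfProcess

namespace IsStdBrownianMotion

open Set

variable {Ω : Type*} {B : ℝ → Ω → ℝ} {T a b c d : ℝ}

/- Clamping time to `[0, T]` extends `B` to a jointly measurable process indexed by all of `ℝ`,
to which the Fubini lemmas for square-integrable processes apply, without changing its paths
on `[0, T]`. -/
theorem trapezoidError_projIcc (hT : 0 ≤ T) (hab : a ≤ b) (hsub : Icc a b ⊆ Icc 0 T) (ω : Ω) :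
    trapezoidError a b (fun s => B (projIcc 0 T hT s) ω) = trapezoidError a b (B · ω) :=
  trapezoidError_congr fun s hs => by
    rw [uIcc_of_le hab] at hs
    rw [projIcc_of_mem hT (hsub hs)]

variable [MeasurableSpace Ω] {P : Measure Ω} (hB : IsStdBrownianMotion P B T)
include hB

theorem hasLaw {s : ℝ} (hs : s ∈ Icc 0 T) : HasLaw (B s) (gaussianReal 0 s.toNNReal) P where
  aemeasurable := (hB.1 s hs).aemeasurable
  map_eq := by simpa using hB.2.2.2 1 (fun _ => s) (fun _ => hs) (fun _ => 1)

theorem hasLaw_add {s u : ℝ} (hs : s ∈ Icc 0 T) (hu : u ∈ Icc 0 T) :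
    HasLaw (B s + B u) (gaussianReal 0 (s + u + 2 * min s u).toNNReal) P where
  aemeasurable := ((hB.1 s hs).add (hB.1 u hu)).aemeasurable
  map_eq := by
    convert hB.2.2.2 2 ![s, u] (fun i => by fin_cases i <;> simpa) ![1, 1] using 3
    · simp [Fin.sum_univ_two]
    · simp [Fin.sum_univ_two, min_comm u s]
      ring

theorem memLp {s : ℝ} (hs : s ∈ Icc 0 T) : MemLp (B s) 2 P :=
  (hB.hasLaw hs).hasGaussianLaw.memLp_two

theorem integral_eq_zero {s : ℝ} (hs : s ∈ Icc 0 T) : ∫ ω, B s ω ∂P = 0 := by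
  rw [(hB.hasLaw hs).integral_eq, integral_id_gaussianReal]

theorem variance_eq {s : ℝ} (hs : s ∈ Icc 0 T) : Var[B s; P] = s := by
  rw [(hB.hasLaw hs).variance_eq, variance_id_gaussianReal, Real.coe_toNNReal _ hs.1]

theorem measurable_uncurry_projIcc (hT : 0 ≤ T) :
    Measurable (Function.uncurry fun s => B (projIcc 0 T hT s)) :=
  measurable_uncurry_of_continuous_of_measurable
    (fun ω => (hB.2.1 ω).comp_continuous (continuous_subtype_val.comp continuous_projIcc)
      fun s => (projIcc 0 T hT s).2)
    fun s => hB.1 _ (projIcc 0 T hT s).2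

variable [IsProbabilityMeasure P]

/- Polarization: the law of `B s + B u` gives `Var[B s + B u] = s + u + 2 min s u`. -/
theorem integral_mul_eq_min {s u : ℝ} (hs : s ∈ Icc 0 T) (hu : u ∈ Icc 0 T) :
    ∫ ω, B s ω * B u ω ∂P = min s u := by
  have hvar := variance_add (hB.memLp hs) (hB.memLp hu)
  rw [(hB.hasLaw_add hs hu).variance_eq, variance_id_gaussianReal, hB.variance_eq hs,
    hB.variance_eq hu, Real.coe_toNNReal _ (by linarith [le_min hs.1 hu.1, hs.1, hu.1]),
    covariance_eq_sub (hB.memLp hs) (hB.memLp hu), hB.integral_eq_zero hs,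
    hB.integral_eq_zero hu] at hvar
  simp only [Pi.mul_apply] at hvar
  linarith

theorem integral_sq_projIcc_le (hT : 0 ≤ T) (s : ℝ) :
    ∫ ω, B (projIcc 0 T hT s) ω ^ 2 ∂P ≤ T := by
  simp only [sq, hB.integral_mul_eq_min (projIcc 0 T hT s).2 (projIcc 0 T hT s).2, min_self]
  exact (projIcc 0 T hT s).2.2

theorem integrable_trapezoidError (hab : a ≤ b) (hsub : Icc a b ⊆ Icc 0 T) :
    Integrable (fun ω => trapezoidError a b (B · ω)) P := by
  have hT := (hsub ⟨le_rfl, hab⟩).1.trans (hsub ⟨le_rfl, hab⟩).2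
  exact (_root_.integrable_trapezoidError (hB.measurable_uncurry_projIcc hT)
    (fun s => hB.memLp (projIcc 0 T hT s).2) (hB.integral_sq_projIcc_le hT) hab).congr
    (.of_forall (trapezoidError_projIcc hT hab hsub))

theorem integral_trapezoidError (hab : a ≤ b) (hsub : Icc a b ⊆ Icc 0 T) :
    ∫ ω, trapezoidError a b (B · ω) ∂P = 0 := by
  have hT := (hsub ⟨le_rfl, hab⟩).1.trans (hsub ⟨le_rfl, hab⟩).2
  rw [← integral_congr_ae (.of_forall (trapezoidError_projIcc hT hab hsub)),
    _root_.integral_trapezoidError (hB.measurable_uncurry_projIcc hT)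
      (fun s => hB.memLp (projIcc 0 T hT s).2) (hB.integral_sq_projIcc_le hT) hab]
  simp [hB.integral_eq_zero (projIcc 0 T hT _).2, trapezoidError]

theorem integrable_trapezoidError_mul (hab : a ≤ b) (hsub : Icc a b ⊆ Icc 0 T) (hcd : c ≤ d)
    (hsub' : Icc c d ⊆ Icc 0 T) :
    Integrable (fun ω => trapezoidError a b (B · ω) * trapezoidError c d (B · ω)) P := by
  have hT := (hsub ⟨le_rfl, hab⟩).1.trans (hsub ⟨le_rfl, hab⟩).2
  refine (_root_.integrable_trapezoidError_mul (hB.measurable_uncurry_projIcc hT)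
    (fun s => hB.memLp (projIcc 0 T hT s).2) (hB.integral_sq_projIcc_le hT) hab hcd).congr
    (.of_forall fun ω => ?_)
  dsimp only
  rw [trapezoidError_projIcc hT hab hsub, trapezoidError_projIcc hT hcd hsub']

theorem integral_trapezoidError_mul (hab : a ≤ b) (hsub : Icc a b ⊆ Icc 0 T) (hcd : c ≤ d)
    (hsub' : Icc c d ⊆ Icc 0 T) :
    ∫ ω, trapezoidError a b (B · ω) * trapezoidError c d (B · ω) ∂P
      = trapezoidError a b (fun s => trapezoidError c d (fun u => min s u)) := by
  have hT := (hsub ⟨le_rfl, hab⟩).1.trans (hsub ⟨le_rfl, hab⟩).2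
  rw [← integral_congr_ae (.of_forall fun ω => by
      rw [← trapezoidError_projIcc hT hab hsub, ← trapezoidError_projIcc hT hcd hsub']),
    _root_.integral_trapezoidError_mul (hB.measurable_uncurry_projIcc hT)
      (fun s => hB.memLp (projIcc 0 T hT s).2) (hB.integral_sq_projIcc_le hT) hab hcd]
  refine trapezoidError_congr fun s hs => trapezoidError_congr fun u hu => ?_
  rw [uIcc_of_le hab] at hs
  rw [uIcc_of_le hcd] at hu
  rw [hB.integral_mul_eq_min (projIcc 0 T hT s).2 (projIcc 0 T hT u).2,
    projIcc_of_mem hT (hsub hs), projIcc_of_mem hT (hsub' hu)]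

variable {n : ℕ} {t : ℕ → ℝ} (ht : MonotoneOn t (Set.Iic n)) (h0 : 0 ≤ t 0) (htT : t n ≤ T)
include ht h0 htT

theorem integral_sum_trapezoidError :
    ∫ ω, ∑ j ∈ Finset.range n, trapezoidError (t j) (t (j + 1)) (B · ω) ∂P = 0 := by
  have hsub {j} (hj : j ∈ Finset.range n) : Icc (t j) (t (j + 1)) ⊆ Icc 0 T :=
    (ht.Icc_subset_Icc_of_Iic j.le_succ (Finset.mem_range.mp hj)).trans (Icc_subset_Icc h0 htT)
  have hle {j} (hj : j ∈ Finset.range n) : t j ≤ t (j + 1) :=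
    ht.le_succ_of_lt (Finset.mem_range.mp hj)
  rw [integral_finsetSum _ fun j hj => hB.integrable_trapezoidError (hle hj) (hsub hj)]
  exact Finset.sum_eq_zero fun j hj => hB.integral_trapezoidError (hle hj) (hsub hj)

theorem integral_sq_sum_trapezoidError :
    ∫ ω, (∑ j ∈ Finset.range n, trapezoidError (t j) (t (j + 1)) (B · ω)) ^ 2 ∂P
      = ∑ j ∈ Finset.range n, (t (j + 1) - t j) ^ 3 / 12 := by
  have hsub {j} (hj : j ∈ Finset.range n) : Icc (t j) (t (j + 1)) ⊆ Icc 0 T :=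
    (ht.Icc_subset_Icc_of_Iic j.le_succ (Finset.mem_range.mp hj)).trans (Icc_subset_Icc h0 htT)
  have hle {j} (hj : j ∈ Finset.range n) : t j ≤ t (j + 1) :=
    ht.le_succ_of_lt (Finset.mem_range.mp hj)
  rw [integral_sq_sum_of_orthogonal _ _ (fun j hj k hk => hB.integrable_trapezoidError_mul
    (hle hj) (hsub hj) (hle hk) (hsub hk)) fun j hj k hk hjk => ?_]
  · refine Finset.sum_congr rfl fun j hj => ?_
    simp_rw [sq]
    rw [hB.integral_trapezoidError_mul (hle hj) (hsub hj) (hle hj) (hsub hj),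
      trapezoidError_trapezoidError_min_self (hle hj)]
  · rw [hB.integral_trapezoidError_mul (hle hj) (hsub hj) (hle hk) (hsub hk)]
    refine trapezoidError_trapezoidError_min_of_le_or_le (hle hj) (hle hk) ?_
    have hj := Finset.mem_range.mp hj
    have hk := Finset.mem_range.mp hk
    rcases hjk.lt_or_gt with h | h
    · exact .inl (ht (Set.mem_Iic.2 hj) (Set.mem_Iic.2 hk.le) h)
    · exact .inr (ht (Set.mem_Iic.2 hk) (Set.mem_Iic.2 hj.le) h)

end IsStdBrownianMotion

theorem trapezoid_brownian_mean_zero_and_mse_general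
    {Ω : Type*} [MeasurableSpace Ω] (P : Measure Ω) [IsProbabilityMeasure P]
    (T : ℝ) (B : ℝ → Ω → ℝ) (hB : IsStdBrownianMotion P B T)
    (J : ℕ) (t : ℕ → ℝ)
    (ht0 : t 0 = 0) (htJ : t (J - 1) = T)
    (hmono : ∀ j, j + 1 ≤ J - 1 → t j < t (j + 1)) :
    (∫ ω, ((∫ s in (0 : ℝ)..T, B s ω) - trapezoid J t fun j => B (t j) ω) ∂P) = 0 ∧
    (∫ ω, ((∫ s in (0 : ℝ)..T, B s ω) - trapezoid J t fun j => B (t j) ω) ^ 2 ∂P)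
      = (1 / 12) * ∑ j ∈ Finset.range (J - 1), (t (j + 1) - t j) ^ 3 := by
  have ht : MonotoneOn t (Set.Iic (J - 1)) := (strictMonoOn_Iic_of_lt_succ hmono).monotoneOn
  have herr : ∀ ω, (∫ s in (0 : ℝ)..T, B s ω) - trapezoid J t (fun j => B (t j) ω)
      = ∑ j ∈ Finset.range (J - 1), trapezoidError (t j) (t (j + 1)) (B · ω) := fun ω => by
    rw [← ht0, ← htJ]
    exact integral_sub_trapezoid J t _ ht (by rw [ht0, htJ]; exact hB.2.1 ω)
  rw [integral_congr_ae (.of_forall herr),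
    integral_congr_ae (.of_forall fun ω => congrArg (· ^ 2) (herr ω)),
    hB.integral_sum_trapezoidError ht ht0.ge htJ.le,
    hB.integral_sq_sum_trapezoidError ht ht0.ge htJ.le, Finset.mul_sum]
  exact ⟨rfl, Finset.sum_congr rfl fun j _ => by ring⟩

/-- The trapezoidal-rule estimator of `∫_0^T B_t dt` from the node data
`(t j, B (t j))` has mean zero, and its mean squared error equals
`(1/12) ∑_j (t (j+1) - t j)^3`. -/
theorem trapezoid_brownian_mean_zero_and_mse
    {Ω : Type*} [MeasurableSpace Ω] (P : Measure Ω) [IsProbabilityMeasure P]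
    (T : ℝ) (B : ℝ → Ω → ℝ) (hB : IsStdBrownianMotion P B T)
    (J : ℕ) (hJ : 2 ≤ J) (t : ℕ → ℝ)
    (ht0 : t 0 = 0) (htJ : t (J - 1) = T)
    (hmono : ∀ j, j + 1 ≤ J - 1 → t j < t (j + 1)) :
    (∫ ω, ((∫ s in (0 : ℝ)..T, B s ω) - trapezoid J t fun j => B (t j) ω) ∂P) = 0 ∧
    (∫ ω, ((∫ s in (0 : ℝ)..T, B s ω) - trapezoid J t fun j => B (t j) ω) ^ 2 ∂P)
      = (1 / 12) * ∑ j ∈ Finset.range (J - 1), (t (j + 1) - t j) ^ 3 :=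
  trapezoid_brownian_mean_zero_and_mse_general P T B hB J t ht0 htJ hmono
end

section
/- Let E be an infinite-dimensional separable real Banach space. If μ is a translation-invariant Borel measure on E that assigns finite measure to some nonempty open subset of E, then μ is the zero measure. Equivalently, there is no analogue of Lebesgue measure (a nonzero, translation-invariant, locally finite Borel measure) on an infinite-dimensional separable Banach space. -/
open MeasureTheory

/-- Translated balls have the same measure under a translation-invariant measure. -/
lemma ball_translate_aux {E : Type*} [NormedAddCommGroup E]
    [MeasurableSpace E] [BorelSpace E] (μ : Measure E)
    (htrans : ∀ (x : E) (A : Set E), MeasurableSet A → μ ((fun y => x + y) '' A) = μ A)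
    (x : E) (ε : ℝ) : μ (Metric.ball x ε) = μ (Metric.ball 0 ε) := by
  have h := htrans x (Metric.ball 0 ε) measurableSet_ball
  rw [← h]
  congr 1
  ext y
  constructor
  · intro hy
    rw [Metric.mem_ball, dist_eq_norm] at hy
    refine ⟨y - x, ?_, by simp⟩
    rw [Metric.mem_ball, dist_zero_right]
    exact hy
  · rintro ⟨z, hz, rfl⟩
    rw [Metric.mem_ball, dist_zero_right] at hz
    rw [Metric.mem_ball, dist_eq_norm]
    simpa using hz

/-- There is no analogue of Lebesgue measure on an infinite-dimensional separable
real Banach space: any translation-invariant Borel measure assigning finite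
measure to some nonempty open set is the zero measure. -/
theorem no_infinite_dimensional_lebesgue_measure
    {E : Type*} [NormedAddCommGroup E] [NormedSpace ℝ E] [CompleteSpace E]
    [TopologicalSpace.SeparableSpace E]
    [MeasurableSpace E] [BorelSpace E]
    (hinf : ¬ FiniteDimensional ℝ E)
    (μ : Measure E)
    (htrans : ∀ (x : E) (A : Set E), MeasurableSet A → μ ((fun y => x + y) '' A) = μ A)
    (hfin : ∃ U : Set E, IsOpen U ∧ U.Nonempty ∧ μ U < ⊤) :
    μ = 0 := by
  obtain ⟨U, hU, ⟨x₀, hx₀⟩, hμU⟩ := hfin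
  obtain ⟨r, hr, hball⟩ := Metric.isOpen_iff.mp hU x₀ hx₀
  -- the ball of radius r at 0 has finite measure
  have hfin0 : μ (Metric.ball (0 : E) r) < ⊤ := by
    rw [← ball_translate_aux μ htrans x₀ r]
    exact lt_of_le_of_lt (measure_mono hball) hμU
  -- Riesz sequence
  obtain ⟨R, f, hR, hf, hsep⟩ := exists_seq_norm_le_one_le_norm_sub (𝕜 := ℝ) hinf
  have hRpos : (0 : ℝ) < R := lt_trans one_pos hR
  set ε : ℝ := r / (4 * R) with hε
  have hεpos : 0 < ε := div_pos hr (by linarith)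
  set g : ℕ → E := fun n => (r / (2 * R)) • f n with hg
  have hgnorm : ∀ n, ‖g n‖ ≤ r / 2 := by
    intro n
    rw [hg]
    simp only [norm_smul, Real.norm_eq_abs]
    rw [abs_of_pos (div_pos hr (by linarith))]
    calc r / (2 * R) * ‖f n‖ ≤ r / (2 * R) * R := by
          apply mul_le_mul_of_nonneg_left (hf n) (le_of_lt (div_pos hr (by linarith)))
      _ = r / 2 := by field_simp
  have hgsep : ∀ m n, m ≠ n → 2 * ε ≤ ‖g m - g n‖ := by
    intro m n hmn
    rw [hg]
    simp only
    rw [← smul_sub, norm_smul, Real.norm_eq_abs, abs_of_pos (div_pos hr (by linarith))]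
    calc 2 * ε = r / (2 * R) * 1 := by rw [hε]; field_simp; ring
      _ ≤ r / (2 * R) * ‖f m - f n‖ :=
          mul_le_mul_of_nonneg_left (hsep hmn) (le_of_lt (div_pos hr (by linarith)))
  -- the balls around g n of radius ε are pairwise disjoint and inside ball 0 r
  have hdisj : Pairwise (Function.onFun Disjoint fun n => Metric.ball (g n) ε) := by
    intro m n hmn
    apply Metric.ball_disjoint_ball
    calc ε + ε = 2 * ε := by ring
      _ ≤ ‖g m - g n‖ := hgsep m n hmn
      _ = dist (g m) (g n) := (dist_eq_norm _ _).symm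
  have hsub : ∀ n, Metric.ball (g n) ε ⊆ Metric.ball (0 : E) r := by
    intro n y hy
    rw [Metric.mem_ball, dist_zero_right]
    have h1 : dist y (g n) < ε := hy
    have h2 : ε ≤ r / 4 := by
      rw [hε]
      apply div_le_div_of_nonneg_left hr.le (by linarith)
      nlinarith
    calc ‖y‖ ≤ ‖y - g n‖ + ‖g n‖ := by simpa using norm_add_le (y - g n) (g n)
      _ < ε + r / 2 := by
          apply add_lt_add_of_lt_of_le _ (hgnorm n)
          rwa [← dist_eq_norm]
      _ ≤ r / 4 + r / 2 := by linarith
      _ < r := by linarith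
  -- conclude small balls are null
  have hnull : μ (Metric.ball (0 : E) ε) = 0 := by
    by_contra hne
    have hsum : μ (⋃ n, Metric.ball (g n) ε) = ∑' n : ℕ, μ (Metric.ball (g n) ε) :=
      measure_iUnion hdisj fun n => measurableSet_ball
    have heach : ∀ n, μ (Metric.ball (g n) ε) = μ (Metric.ball (0 : E) ε) :=
      fun n => ball_translate_aux μ htrans (g n) ε
    have htop : μ (⋃ n, Metric.ball (g n) ε) = ⊤ := by
      rw [hsum]
      simp only [heach]
      exact ENNReal.tsum_const_eq_top_of_ne_zero hne
    have : μ (⋃ n, Metric.ball (g n) ε) ≤ μ (Metric.ball (0 : E) r) :=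
      measure_mono (Set.iUnion_subset hsub)
    rw [htop] at this
    exact absurd (lt_of_le_of_lt this hfin0) (lt_irrefl ⊤)
  -- all balls of radius ε are null; cover E by countably many
  obtain ⟨D, hDcount, hDdense⟩ := TopologicalSpace.exists_countable_dense E
  have hcover : (Set.univ : Set E) ⊆ ⋃ d ∈ D, Metric.ball d ε := by
    intro x _
    obtain ⟨d, hd1, hd2⟩ := Metric.dense_iff.mp hDdense x ε hεpos
    exact Set.mem_biUnion hd2 (Metric.mem_ball'.mpr (Metric.mem_ball.mp hd1))
  have huniv : μ Set.univ = 0 := by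
    apply measure_mono_null hcover
    apply (measure_biUnion_null_iff hDcount).mpr
    intro d _
    rw [ball_translate_aux μ htrans d ε]
    exact hnull
  exact Measure.measure_univ_eq_zero.mp huniv
end

section
/- Let U, 𝒴, and 𝒬 be standard Borel spaces, μ a Borel probability measure on U, Y : U → 𝒴 and Q : U → 𝒬 Borel measurable, L : 𝒬 × 𝒬 → [0, ∞] a Borel measurable loss function, and y ↦ μ^y a disintegration of μ with respect to Y. Then for every Borel measurable B : 𝒴 → 𝒬 the average error decomposes as ∫_U L(Q(u), B(Y(u))) dμ(u) = ∫_𝒴 ∫_U L(Q(u), B(y)) dμ^y(u) d(Y_♯μ)(y). Consequently, if B* : 𝒴 → 𝒬 is Borel measurable and for Y_♯μ-almost every y the point B*(y) minimises b ↦ ∫_U L(Q(u), b) dμ^y(u) over 𝒬, then B* minimises the average error ∫_U L(Q(u), B(Y(u))) dμ(u) over all Borel measurable B : 𝒴 → 𝒬; i.e. average-case optimal numerical methods coincide with (non-randomised) Bayes rules when the measure defining the average error is the Bayesian prior. -/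
/-!
Since `μ(E) = ∫ μ^y(E) d(Y_♯μ)(y)`, the prior is the bind of `Y_♯μ` with the disintegration, so
every integral against `μ` is an iterated integral. On the fibre `{Y = y}`, which carries `μ^y`,
the error `L(Q(u), B(Y(u)))` of a method is `L(Q(u), B(y))`; hence the average error is the
`Y_♯μ`-average of the posterior expected loss at `B(y)`, and a pointwise a.e. minimiser of the
posterior expected loss minimises the average error.
-/

open MeasureTheory ProbabilityTheory

namespace MeasureTheory.Measure

variable {α β : Type*} [MeasurableSpace α] [MeasurableSpace β]

structure IsDisintegration (μ : Measure α) (Y : α → β) (κ : Kernel β α) : Prop where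
  ae_measure_fiber_compl : ∀ᵐ y ∂(μ.map Y), κ y {u | Y u ≠ y} = 0
  measure_eq_lintegral : ∀ E : Set α, MeasurableSet E → μ E = ∫⁻ y, κ y E ∂(μ.map Y)

namespace IsDisintegration

variable {μ : Measure α} {Y : α → β} {κ : Kernel β α}

theorem eq_bind (h : IsDisintegration μ Y κ) : μ = (μ.map Y).bind κ := by
  ext E hE
  rw [bind_apply hE κ.measurable.aemeasurable, h.measure_eq_lintegral E hE]

theorem lintegral_eq_lintegral_lintegral (h : IsDisintegration μ Y κ) {f : α → ENNReal}
    (hf : Measurable f) : ∫⁻ u, f u ∂μ = ∫⁻ y, ∫⁻ u, f u ∂(κ y) ∂(μ.map Y) := by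
  conv_lhs => rw [h.eq_bind]
  exact lintegral_bind κ.measurable.aemeasurable hf.aemeasurable

theorem ae_ae_apply_eq (h : IsDisintegration μ Y κ) : ∀ᵐ y ∂(μ.map Y), ∀ᵐ u ∂(κ y), Y u = y := by
  filter_upwards [h.ae_measure_fiber_compl] with y hy
  rwa [ae_iff]

theorem lintegral_comp_eq_lintegral_lintegral (h : IsDisintegration μ Y κ)
    {f : α → β → ENNReal} (hf : Measurable fun u => f u (Y u)) :
    ∫⁻ u, f u (Y u) ∂μ = ∫⁻ y, ∫⁻ u, f u y ∂(κ y) ∂(μ.map Y) := by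
  rw [h.lintegral_eq_lintegral_lintegral hf]
  refine lintegral_congr_ae ?_
  filter_upwards [h.ae_ae_apply_eq] with y hy
  refine lintegral_congr_ae ?_
  filter_upwards [hy] with u hu
  rw [hu]

end IsDisintegration

end MeasureTheory.Measure

theorem average_case_optimal_iff_bayes_rule_general
    {U 𝒴 𝒬 : Type*} [MeasurableSpace U]
    [MeasurableSpace 𝒴]
    [MeasurableSpace 𝒬]
    (μ : Measure U)
    (Y : U → 𝒴) (hY : Measurable Y)
    (Q : U → 𝒬) (hQ : Measurable Q)
    (L : 𝒬 → 𝒬 → ENNReal) (hL : Measurable (Function.uncurry L))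
    (κ : ProbabilityTheory.Kernel 𝒴 U)
    (hκ_fib : ∀ᵐ y ∂(μ.map Y), κ y {u | Y u ≠ y} = 0)
    (hκ_rec : ∀ E : Set U, MeasurableSet E → μ E = ∫⁻ y, κ y E ∂(μ.map Y)) :
    (∀ B : 𝒴 → 𝒬, Measurable B →
      ∫⁻ u, L (Q u) (B (Y u)) ∂μ
        = ∫⁻ y, ∫⁻ u, L (Q u) (B y) ∂(κ y) ∂(μ.map Y)) ∧
    (∀ Bstar : 𝒴 → 𝒬, Measurable Bstar →
      (∀ᵐ y ∂(μ.map Y), ∀ b : 𝒬,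
        ∫⁻ u, L (Q u) (Bstar y) ∂(κ y) ≤ ∫⁻ u, L (Q u) b ∂(κ y)) →
      ∀ B : 𝒴 → 𝒬, Measurable B →
        ∫⁻ u, L (Q u) (Bstar (Y u)) ∂μ ≤ ∫⁻ u, L (Q u) (B (Y u)) ∂μ) := by
  have hdis : μ.IsDisintegration Y κ := ⟨hκ_fib, hκ_rec⟩
  have average_error_eq (B : 𝒴 → 𝒬) (hB : Measurable B) :
      ∫⁻ u, L (Q u) (B (Y u)) ∂μ = ∫⁻ y, ∫⁻ u, L (Q u) (B y) ∂(κ y) ∂(μ.map Y) :=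
    hdis.lintegral_comp_eq_lintegral_lintegral (f := fun u y => L (Q u) (B y))
      (hL.comp (hQ.prodMk (hB.comp hY)))
  refine ⟨average_error_eq, fun Bstar hBstar hopt B hB => ?_⟩
  rw [average_error_eq Bstar hBstar, average_error_eq B hB]
  exact lintegral_mono_ae (hopt.mono fun y hy => hy (B y))

/-- Average-case optimal numerical methods are Bayes rules: given a disintegration
`y ↦ μ^y` of the prior `μ` with respect to the information operator `Y`, the
average error of any method `B` decomposes as an iterated integral of the
posterior expected loss, and consequently any measurable `B*` whose value `B*(y)`
minimises the posterior expected loss for almost every `y` minimises the average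
error among all Borel measurable methods. -/
theorem average_case_optimal_iff_bayes_rule
    {U 𝒴 𝒬 : Type*} [MeasurableSpace U] [StandardBorelSpace U]
    [MeasurableSpace 𝒴] [StandardBorelSpace 𝒴]
    [MeasurableSpace 𝒬] [StandardBorelSpace 𝒬]
    (μ : Measure U) [IsProbabilityMeasure μ]
    (Y : U → 𝒴) (hY : Measurable Y)
    (Q : U → 𝒬) (hQ : Measurable Q)
    (L : 𝒬 → 𝒬 → ENNReal) (hL : Measurable (Function.uncurry L))
    (κ : ProbabilityTheory.Kernel 𝒴 U) [IsMarkovKernel κ]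
    (hκ_fib : ∀ᵐ y ∂(μ.map Y), κ y {u | Y u ≠ y} = 0)
    (hκ_rec : ∀ E : Set U, MeasurableSet E → μ E = ∫⁻ y, κ y E ∂(μ.map Y)) :
    (∀ B : 𝒴 → 𝒬, Measurable B →
      ∫⁻ u, L (Q u) (B (Y u)) ∂μ
        = ∫⁻ y, ∫⁻ u, L (Q u) (B y) ∂(κ y) ∂(μ.map Y)) ∧
    (∀ Bstar : 𝒴 → 𝒬, Measurable Bstar →
      (∀ᵐ y ∂(μ.map Y), ∀ b : 𝒬,
        ∫⁻ u, L (Q u) (Bstar y) ∂(κ y) ≤ ∫⁻ u, L (Q u) b ∂(κ y)) →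
      ∀ B : 𝒴 → 𝒬, Measurable B →
        ∫⁻ u, L (Q u) (Bstar (Y u)) ∂μ ≤ ∫⁻ u, L (Q u) (B (Y u)) ∂μ) :=
  average_case_optimal_iff_bayes_rule_general μ Y hY Q hQ L hL κ hκ_fib hκ_rec
end
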